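/- For all positive integers n and k, the interaction coefficient satisfies S_{n,n,k,k} = min(n,k). -/
import Mathlib


open Real Set Finset

/-- The function 𝔪(j,k) = (1/2)·sgn(j)·sgn(k)·min(|j|,|k|). -/
noncomputable def frakm (j k : ℤ) : ℝ :=
  (1 / 2 : ℝ) * (j.sign : ℝ) * (k.sign : ℝ) * ((min |j| |k| : ℤ) : ℝ)

/-- The interaction coefficient S_{j,k,l,m}. -/
noncomputable def Scoef (j k l m : ℤ) : ℝ :=
  if Even (j + k + l + m) then
    frakm (j + k - l) m + frakm (j - k + l) m + frakm (-j + k + l) m - frakm (j + k + l) m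
  else 0

/-- S_{n,n,k,k} = min(n,k). -/
theorem interaction_nnkk (n k : ℕ) (hn : 0 < n) (hk : 0 < k) :
    Scoef n n k k = min n k := by
  have hkz : (0:ℤ) < k := by exact_mod_cast hk
  have hnz : (0:ℤ) < n := by exact_mod_cast hn
  have hEven : Even ((n:ℤ) + n + k + k) := ⟨n + k, by ring⟩
  simp only [Scoef, if_pos hEven, frakm]
  have e1 : ((n:ℤ) - n + k) = k := by ring
  have e2 : (-(n:ℤ) + n + k) = k := by ring
  have e3 : ((n:ℤ) + n + k) = 2*n + k := by ring
  have e4 : ((n:ℤ) + n - k) = 2*n - k := by ring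
  rw [e1, e2, e3, e4]
  have sk : (k:ℤ).sign = 1 := Int.sign_eq_one_of_pos hkz
  have s3 : ((2*n + k : ℤ)).sign = 1 := Int.sign_eq_one_of_pos (by omega)
  have ak : |(k:ℤ)| = k := abs_of_pos hkz
  have a3 : |(2*(n:ℤ) + k)| = 2*n + k := abs_of_pos (by omega)
  have m3 : min |(2*(n:ℤ) + k)| |(k:ℤ)| = k := by rw [a3, ak]; omega
  rw [sk, s3, m3]
  have hkr : (0:ℝ) < k := by exact_mod_cast hk
  rcases lt_trichotomy (2*(n:ℤ) - k) 0 with h | h | h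
  · have s4 : ((2*(n:ℤ) - k)).sign = -1 := Int.sign_eq_neg_one_of_neg h
    have a4 : |(2*(n:ℤ) - k)| = k - 2*n := by rw [abs_of_neg h]; ring
    have m4 : min |(2*(n:ℤ) - k)| |(k:ℤ)| = k - 2*n := by rw [a4, ak]; omega
    rw [s4, m4]
    have hmin : min (n:ℝ) k = n := by
      have : (n:ℝ) ≤ k := by exact_mod_cast (by omega : (n:ℤ) ≤ k)
      simp [min_eq_left this]
    push_cast [hmin, min_self, abs_of_pos hkr]
    ring
  · have s4 : ((2*(n:ℤ) - k)).sign = 0 := by rw [Int.sign_eq_zero_iff_zero]; omega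
    rw [s4]
    have hmin : min (n:ℝ) k = n := by
      have : (n:ℝ) ≤ k := by exact_mod_cast (by omega : (n:ℤ) ≤ k)
      simp [min_eq_left this]
    have hk2 : (k:ℝ) = 2*n := by exact_mod_cast (by omega : (k:ℤ) = 2*n)
    rw [ak]
    push_cast [hmin, hk2, min_self]
    rw [min_eq_left (by linarith : (n:ℝ) ≤ 2*n)]
    ring
  · have s4 : ((2*(n:ℤ) - k)).sign = 1 := Int.sign_eq_one_of_pos h
    have a4 : |(2*(n:ℤ) - k)| = 2*n - k := abs_of_pos h
    rw [s4, a4, ak]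
    rcases le_or_gt (k:ℤ) n with hle | hlt
    · have m4 : min (2*(n:ℤ) - k) k = k := by omega
      rw [m4]
      have hmin : min (n:ℝ) k = k := by
        have : (k:ℝ) ≤ n := by exact_mod_cast hle
        simp [min_eq_right this]
      push_cast [hmin, min_self]; ring
    · have m4 : min (2*(n:ℤ) - k) k = 2*n - k := by omega
      rw [m4]
      have hmin : min (n:ℝ) k = n := by
        have : (n:ℝ) ≤ k := by exact_mod_cast hlt.le
        simp [min_eq_left this]
      push_cast [hmin, min_self]; ring
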